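/- Let N ≥ 1 and let y₁, …, y_N ∈ [0, 2π). Then the series ∑_{m=1}^∞ (1/m²)·|∑_{j=1}^N e^{i m y_j}|² converges and equals π² ∑_{j,j'=1}^N B₂(frac((y_j − y_{j'})/(2π))), where B₂(x) = x² − x + 1/6 is the second Bernoulli polynomial and frac denotes the fractional part (with frac(0) = 0). -/

import Mathlib

/-!
Expanding `|∑ⱼ e^{i m yⱼ}|²` gives `∑_{j,j'} cos (m (yⱼ - y_{j'}))`, so the series splits into
`N²` series `∑ₘ cos (m θ) / m²`. Since `cos (m θ)` only depends on `θ` modulo `2π`, each of them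
is the Fourier series of the second periodic Bernoulli function evaluated at `frac (θ / 2π)`,
whose sum `π² B₂ (frac (θ / 2π))` is `hasSum_one_div_nat_pow_mul_cos`.
-/

open Real Finset

theorem cos_two_pi_mul_int_mul_fract (n : ℤ) (θ : ℝ) :
    cos (2 * π * n * Int.fract (θ / (2 * π))) = cos (n * θ) := by
  have hπ : 2 * π ≠ 0 := by positivity
  have h : 2 * π * n * Int.fract (θ / (2 * π)) = n * θ + (-n * ⌊θ / (2 * π)⌋ : ℤ) * (2 * π) := by
    rw [Int.fract]
    push_cast
    field_simp
    ring
  rw [h, cos_add_int_mul_two_pi]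

theorem hasSum_cos_nat_succ_mul_div_sq (θ : ℝ) :
    HasSum (fun m : ℕ => 1 / ((m : ℝ) + 1) ^ 2 * cos (((m : ℝ) + 1) * θ))
      (π ^ 2 * bernoulliFun 2 (Int.fract (θ / (2 * π)))) := by
  have hfract : Int.fract (θ / (2 * π)) ∈ Set.Icc (0 : ℝ) 1 :=
    ⟨Int.fract_nonneg _, (Int.fract_lt_one _).le⟩
  have h := (hasSum_nat_add_iff' 1).mpr (hasSum_one_div_nat_pow_mul_cos one_ne_zero hfract)
  convert! h using 1
  · ext m
    have := cos_two_pi_mul_int_mul_fract ((m + 1 : ℕ) : ℤ) θ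
    push_cast at this ⊢
    rw [this]
  · change _ = _ * bernoulliFun 2 _ - _
    rw [sum_range_one, Nat.cast_zero, zero_pow (by norm_num), div_zero, zero_mul, sub_zero]
    simp only [Nat.reduceMul, Nat.reduceAdd, Nat.factorial_two]
    push_cast
    ring

theorem norm_sum_exp_I_mul_sq {ι : Type*} [Fintype ι] (c : ℝ) (y : ι → ℝ) :
    ‖∑ j, Complex.exp (Complex.I * c * y j)‖ ^ 2 = ∑ j, ∑ j', cos (c * (y j - y j')) := by
  have h (z : ℂ) : ‖z‖ ^ 2 = (z * starRingEnd ℂ z).re := by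
    rw [Complex.mul_conj, Complex.ofReal_re, Complex.sq_norm]
  rw [h, map_sum, sum_mul_sum, Complex.re_sum]
  refine sum_congr rfl fun j _ => ?_
  rw [Complex.re_sum]
  refine sum_congr rfl fun j' _ => ?_
  rw [← Complex.exp_conj, ← Complex.exp_add, ← Complex.exp_ofReal_mul_I_re]
  congr 2
  simp only [map_mul, Complex.conj_I, Complex.conj_ofReal]
  push_cast
  ring

theorem second_order_coefficient_series (N : ℕ) (y : Fin N → ℝ) :
    HasSum
      (fun m : ℕ =>
        (1 / ((m : ℝ) + 1) ^ 2) *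
          ‖∑ j, Complex.exp (Complex.I * ((m + 1 : ℕ) : ℂ) * (y j : ℂ))‖ ^ 2)
      (Real.pi ^ 2 * ∑ j, ∑ j',
        (Int.fract ((y j - y j') / (2 * Real.pi)) ^ 2 -
          Int.fract ((y j - y j') / (2 * Real.pi)) + 1 / 6)) := by
  have hterm (m : ℕ) :
      1 / ((m : ℝ) + 1) ^ 2 * ‖∑ j, Complex.exp (Complex.I * ((m + 1 : ℕ) : ℂ) * (y j : ℂ))‖ ^ 2 =
        ∑ j, ∑ j', 1 / ((m : ℝ) + 1) ^ 2 * cos (((m : ℝ) + 1) * (y j - y j')) := by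
    rw [← Complex.ofReal_natCast, norm_sum_exp_I_mul_sq, mul_sum]
    push_cast
    simp only [mul_sum]
  have hvalue : π ^ 2 * ∑ j, ∑ j', (Int.fract ((y j - y j') / (2 * π)) ^ 2 -
      Int.fract ((y j - y j') / (2 * π)) + 1 / 6) =
        ∑ j, ∑ j', π ^ 2 * bernoulliFun 2 (Int.fract ((y j - y j') / (2 * π))) := by
    simp only [mul_sum, bernoulliFun_two, one_div]
  rw [hvalue]
  exact (hasSum_sum fun j _ => hasSum_sum fun j' _ =>
    hasSum_cos_nat_succ_mul_div_sq (y j - y j')).congr_fun hterm
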